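/- arXiv:cs/0106028 — 3 statements merged into one kernel-verified Lean document; each statement's English description precedes it below -/
import Mathlib

section
/- Let r ∈ ℝ, σ > 0, T > 0, S₀ > 0, K > 0, and let γ be the standard Gaussian measure on ℝ. Write S(x) = S₀·exp((r − σ²/2)·T + σ·√T·x) and d₁ = (log(S₀/K) + (r − σ²/2)·T)/(σ·√T). Then ∫ S(x)·1_{S(x) > K} dγ(x) = S₀·exp(r·T)·Φ(d₁ + σ·√T), where Φ is the cumulative distribution function of the standard Gaussian measure. -/
/-!
With `b = σ √T`, the integrand is `S₀ e^{(r - σ²/2)T} e^{b x} 1_{x > -d₁}`. Weighting the standard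
Gaussian by `e^{b x}` multiplies it by `e^{b²/2}` and shifts its mean to `b` (the one-dimensional
Cameron–Martin/Girsanov shift, `gaussianPDFReal_mul_exp_mul`), so the integral is
`S₀ e^{rT} 𝒩(b, 1)(x > -d₁) = S₀ e^{rT} Φ(d₁ + b)`.
-/
open MeasureTheory ProbabilityTheory

/-- The cumulative distribution function of the standard Gaussian measure. -/
noncomputable def stdNormalCDF (y : ℝ) : ℝ :=
  ((gaussianReal 0 1) (Set.Iic y)).toReal

open Real Set

namespace ProbabilityTheory

lemma gaussianPDFReal_mul_exp_mul (μ : ℝ) (v : NNReal) (t x : ℝ) :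
    gaussianPDFReal μ v x * exp (t * x) =
      exp (μ * t + v * t ^ 2 / 2) * gaussianPDFReal (μ + v * t) v x := by
  rcases eq_or_ne v 0 with rfl | hv
  · simp
  have hv' : (v : ℝ) ≠ 0 := NNReal.coe_ne_zero.mpr hv
  have hexp : -(x - μ) ^ 2 / (2 * v) + t * x =
      μ * t + v * t ^ 2 / 2 + -(x - (μ + v * t)) ^ 2 / (2 * v) := by
    field_simp
    ring
  simp only [gaussianPDFReal]
  rw [mul_assoc, ← exp_add, hexp, exp_add]
  ring

lemma integral_exp_mul_smul_gaussianReal {E : Type*} [NormedAddCommGroup E] [NormedSpace ℝ E]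
    [CompleteSpace E] (μ : ℝ) (v : NNReal) (t : ℝ) (g : ℝ → E) :
    ∫ x, exp (t * x) • g x ∂gaussianReal μ v =
      exp (μ * t + v * t ^ 2 / 2) • ∫ x, g x ∂gaussianReal (μ + v * t) v := by
  rcases eq_or_ne v 0 with rfl | hv
  · simp [gaussianReal_zero_var, integral_dirac, mul_comm]
  rw [integral_gaussianReal_eq_integral_smul hv, integral_gaussianReal_eq_integral_smul hv,
    ← integral_smul]
  congr 1 with x
  rw [smul_smul, smul_smul, mul_comm (exp _), gaussianPDFReal_mul_exp_mul, mul_comm]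

lemma measureReal_Ioi_gaussianReal_one (m c : ℝ) :
    (gaussianReal m 1).real (Ioi c) = stdNormalCDF (m - c) := by
  have hmap : (gaussianReal 0 1).map (m - ·) = gaussianReal m 1 := by
    rw [gaussianReal_map_const_sub, sub_zero]
  have hpre : (m - ·) ⁻¹' Ioi c = Iio (m - c) := by
    ext x; simp [lt_sub_comm]
  have := nullSingletonClass_gaussianReal (μ := (0 : ℝ)) one_ne_zero
  rw [stdNormalCDF, ← hmap, measureReal_def, Measure.map_apply (by fun_prop) measurableSet_Ioi,
    hpre, measure_congr Iio_ae_eq_Iic]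

end ProbabilityTheory

lemma lt_mul_exp_add_mul_iff {S₀ K a b : ℝ} (hS₀ : 0 < S₀) (hK : 0 < K) (hb : 0 < b) (x : ℝ) :
    K < S₀ * exp (a + b * x) ↔ -((log (S₀ / K) + a) / b) < x := by
  rw [← log_lt_log_iff hK (by positivity), log_mul hS₀.ne' (exp_pos _).ne', log_exp,
    log_div hS₀.ne' hK.ne', neg_lt, lt_div_iff₀ hb]
  constructor <;> intro h <;> linarith

theorem expectation_in_the_money
    (r σ T S₀ K : ℝ) (hσ : 0 < σ) (hT : 0 < T) (hS₀ : 0 < S₀) (hK : 0 < K)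
    (S : ℝ → ℝ)
    (hS : ∀ x, S x = S₀ * Real.exp ((r - σ ^ 2 / 2) * T + σ * Real.sqrt T * x))
    (d₁ : ℝ)
    (hd₁ : d₁ = (Real.log (S₀ / K) + (r - σ ^ 2 / 2) * T) / (σ * Real.sqrt T)) :
    ∫ x, S x * (if K < S x then (1 : ℝ) else 0) ∂(gaussianReal 0 1) =
      S₀ * Real.exp (r * T) * stdNormalCDF (d₁ + σ * Real.sqrt T) := by
  set a := (r - σ ^ 2 / 2) * T
  set b := σ * √T
  have hb : 0 < b := by positivity
  have hb2 : a + b ^ 2 / 2 = r * T := by simp only [a, b, mul_pow, sq_sqrt hT.le]; ring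
  have hin_money : ∀ x, K < S x ↔ x ∈ Ioi (-d₁) := fun x => by
    rw [hS, hd₁, mem_Ioi]; exact lt_mul_exp_add_mul_iff hS₀ hK hb x
  calc ∫ x, S x * (if K < S x then (1 : ℝ) else 0) ∂(gaussianReal 0 1)
      = S₀ * exp a * ∫ x, exp (b * x) • (Ioi (-d₁)).indicator 1 x ∂(gaussianReal 0 1) := by
        rw [← integral_const_mul]
        congr with x
        simp only [hin_money, indicator_apply, Pi.one_apply, smul_eq_mul]
        rw [hS, exp_add]
        ring
    _ = S₀ * exp a * (exp (b ^ 2 / 2) * (gaussianReal b 1).real (Ioi (-d₁))) := by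
        rw [integral_exp_mul_smul_gaussianReal, integral_indicator_one measurableSet_Ioi]
        simp
    _ = S₀ * exp (r * T) * stdNormalCDF (d₁ + b) := by
        rw [measureReal_Ioi_gaussianReal_one, ← hb2, exp_add, sub_neg_eq_add, add_comm b]
        ring
end

section
/- Let r ∈ ℝ, σ > 0, T > 0, S₀ > 0, K > 0, and let γ be the standard Gaussian measure on ℝ. Write S(x) = S₀·exp((r − σ²/2)·T + σ·√T·x) and d₁ = (log(S₀/K) + (r − σ²/2)·T)/(σ·√T). Then the value of a European call option with strike K and maturity T satisfies exp(−r·T)·∫ max(S(x) − K, 0) dγ(x) = S₀·Φ(d₁ + σ·√T) − K·exp(−r·T)·Φ(d₁), where Φ is the cumulative distribution function of the standard Gaussian measure. (Black–Scholes call price formula.) -/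
/-!
The payoff vanishes exactly below `x = -d₁`, so the price is the integral of `S - K` over
`[-d₁, ∞)`. Exponential tilting, `exp (b x) · N(0, 1) = exp (b² / 2) · N(b, 1)` with `b = σ√T`,
turns the `S`-part into a tail probability of `N(σ√T, 1)`, while the `K`-part is a tail of
`N(0, 1)`; by symmetry these tails are `Φ(d₁ + σ√T)` and `Φ(d₁)`. The drift `r - σ²/2` is chosen
so that the tilting constant cancels the discount factor.
-/

open MeasureTheory ProbabilityTheory

open Real NNReal

lemma gaussianPDFReal_mul_exp (μ : ℝ) (v : ℝ≥0) (b x : ℝ) :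
    gaussianPDFReal μ v x * exp (b * x) =
      exp (b * μ + b ^ 2 * v / 2) * gaussianPDFReal (μ + b * v) v x := by
  rcases eq_or_ne v 0 with rfl | hv
  · simp
  have hv' : (v : ℝ) ≠ 0 := NNReal.coe_ne_zero.mpr hv
  have hexponent : -(x - μ) ^ 2 / (2 * v) + b * x =
      b * μ + b ^ 2 * v / 2 + -(x - (μ + b * v)) ^ 2 / (2 * v) := by
    field_simp
    ring
  simp only [gaussianPDFReal]
  rw [mul_assoc, ← exp_add, hexponent, exp_add]
  ring

lemma setIntegral_exp_mul_gaussianReal (μ : ℝ) {v : ℝ≥0} (hv : v ≠ 0) (b : ℝ) {s : Set ℝ}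
    (hs : MeasurableSet s) :
    ∫ x in s, exp (b * x) ∂gaussianReal μ v =
      exp (b * μ + b ^ 2 * v / 2) * (gaussianReal (μ + b * v) v).real s := by
  rw [← integral_indicator hs, integral_gaussianReal_eq_integral_smul hv]
  simp_rw [smul_eq_mul, ← Set.indicator_mul_right s, gaussianPDFReal_mul_exp]
  rw [integral_indicator hs, integral_const_mul, measureReal_def,
    gaussianReal_apply_eq_integral _ hv,
    ENNReal.toReal_ofReal (setIntegral_nonneg hs fun x _ ↦ gaussianPDFReal_nonneg _ _ x)]

lemma gaussianReal_real_Ici (μ c : ℝ) :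
    (gaussianReal μ 1).real (Set.Ici c) = stdNormalCDF (μ - c) := by
  have hsymm : (gaussianReal μ 1).map (μ - ·) = gaussianReal 0 1 := by
    rw [gaussianReal_map_const_sub, sub_self]
  have hpreimage : (μ - ·) ⁻¹' Set.Iic (μ - c) = Set.Ici c := by
    ext x
    simp
  rw [stdNormalCDF, ← hsymm, Measure.map_apply (by fun_prop) measurableSet_Iic, hpreimage,
    measureReal_def]

lemma integral_max_exp_sub_gaussianReal {A b c K : ℝ} (hA : 0 < A) (hb : 0 < b)
    (hK : A * exp (b * c) = K) :
    ∫ x, max (A * exp (b * x) - K) 0 ∂gaussianReal 0 1 =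
      A * exp (b ^ 2 / 2) * stdNormalCDF (b - c) - K * stdNormalCDF (-c) := by
  have hpayoff : (fun x ↦ max (A * exp (b * x) - K) 0) =
      (Set.Ici c).indicator fun x ↦ A * exp (b * x) - K := by
    ext x
    by_cases hx : c ≤ x
    · have : K ≤ A * exp (b * x) := by rw [← hK]; gcongr
      simp [hx, this]
    · have : A * exp (b * x) ≤ K := by rw [← hK]; gcongr; linarith
      simp [hx, this]
  rw [hpayoff, integral_indicator measurableSet_Ici,
    integral_sub ((integrable_exp_mul_gaussianReal b).const_mul A).integrableOn
      (integrable_const K).integrableOn,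
    integral_const_mul, setIntegral_exp_mul_gaussianReal 0 one_ne_zero b measurableSet_Ici,
    setIntegral_const, gaussianReal_real_Ici, gaussianReal_real_Ici]
  simp only [mul_zero, zero_add, coe_one, mul_one, zero_sub, smul_eq_mul]
  ring

theorem black_scholes_call_price
    (r σ T S₀ K : ℝ) (hσ : 0 < σ) (hT : 0 < T) (hS₀ : 0 < S₀) (hK : 0 < K)
    (S : ℝ → ℝ)
    (hS : ∀ x, S x = S₀ * Real.exp ((r - σ ^ 2 / 2) * T + σ * Real.sqrt T * x))
    (d₁ : ℝ)
    (hd₁ : d₁ = (Real.log (S₀ / K) + (r - σ ^ 2 / 2) * T) / (σ * Real.sqrt T)) :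
    Real.exp (-r * T) * ∫ x, max (S x - K) 0 ∂(gaussianReal 0 1) =
      S₀ * stdNormalCDF (d₁ + σ * Real.sqrt T) -
        K * Real.exp (-r * T) * stdNormalCDF d₁ := by
  set b := σ * √T
  set a := (r - σ ^ 2 / 2) * T
  have hb : 0 < b := mul_pos hσ (sqrt_pos.mpr hT)
  have hS' : S = fun x ↦ S₀ * exp a * exp (b * x) := by
    ext x
    rw [hS, exp_add, ← mul_assoc]
  have hstrike : S₀ * exp a * exp (b * -d₁) = K := by
    have : a + b * -d₁ = log (K / S₀) := by
      rw [hd₁, log_div hK.ne' hS₀.ne', log_div hS₀.ne' hK.ne']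
      field_simp
      ring
    rw [mul_assoc, ← exp_add, this, exp_log (div_pos hK hS₀)]
    field_simp
  have hdrift : -r * T + a + b ^ 2 / 2 = 0 := by
    simp only [a, b, mul_pow, sq_sqrt hT.le]
    ring
  rw [hS', integral_max_exp_sub_gaussianReal (by positivity) hb hstrike, sub_neg_eq_add,
    neg_neg, add_comm b]
  calc exp (-r * T) * (S₀ * exp a * exp (b ^ 2 / 2) * stdNormalCDF (d₁ + b) - K * stdNormalCDF d₁)
      = S₀ * exp (-r * T + a + b ^ 2 / 2) * stdNormalCDF (d₁ + b) -
          K * exp (-r * T) * stdNormalCDF d₁ := by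
        rw [exp_add, exp_add]
        ring
    _ = _ := by rw [hdrift, exp_zero, mul_one]
end

section
/- Let N ∈ ℕ, r ∈ ℝ, T > 0, σ : Fin N → ℝ, S_{·,0} : Fin N → ℝ with S_{i,0} > 0 for all i, let m ∈ Fin N, and let P be an N×N real matrix whose m-th row has unit Euclidean norm, i.e. Σ_{j} (P_{mj})² = 1 (equivalently (P·Pᵀ)_{mm} = 1). Let γ^N be the standard Gaussian measure on ℝ^N and define Sᴿ_i(y) = S_{i,0}·exp((r − σ_i²/2)·T + σ_i·√T·(P·y)_i) for y ∈ ℝ^N. Then for every measurable g : (Fin N → ℝ) → ℝ that is nonnegative or such that both sides are integrable, ∫ Sᴿ_m(y)·g(Sᴿ(y)) dγ^N(y) = S_{m,0}·exp(r·T)·∫ g( i ↦ exp(σ_i·σ_m·T·(P·Pᵀ)_{im})·Sᴿ_i(y) ) dγ^N(y). (Multidimensional elimination of the factor S_m from the expectation.) -/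
/-! Writing `Sᴿ_m(y) = S_{m,0} e^{rT} · exp(⟨c, y⟩ - ‖c‖²/2)` with `c = σ_m √T · P_{m·}`
(here `‖c‖² = σ_m² T` because the `m`-th row of `P` has unit norm), the factor
`exp(⟨c, y⟩ - ‖c‖²/2)` turns the Gaussian density `φ(y)` into `φ(y - c)`
(Cameron–Martin). Translating `y ↦ y + c` then multiplies each price `Sᴿ_i` by
`exp(σ_i √T (P c)_i) = exp(σ_i σ_m T (P Pᵀ)_{im})`. -/

open MeasureTheory ProbabilityTheory

/-- The standard Gaussian measure `γ^N` on `ℝ^N`, with density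
`y ↦ (2π)^(−N/2)·exp(−‖y‖²/2)` w.r.t. Lebesgue measure. -/
noncomputable def stdGaussN (N : ℕ) : Measure (Fin N → ℝ) :=
  (volume : Measure (Fin N → ℝ)).withDensity fun y =>
    ENNReal.ofReal (((2 * Real.pi) ^ N) ^ (-(1 : ℝ) / 2) *
      Real.exp (-(∑ i, y i ^ 2) / 2))

namespace StdGaussN

variable {N : ℕ}

noncomputable def pdf (N : ℕ) (y : Fin N → ℝ) : ℝ :=
  ((2 * Real.pi) ^ N) ^ (-(1 : ℝ) / 2) * Real.exp (-(∑ i, y i ^ 2) / 2)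

lemma pdf_nonneg (y : Fin N → ℝ) : 0 ≤ pdf N y := by
  unfold pdf; positivity

lemma eq_withDensity_pdf :
    stdGaussN N = volume.withDensity fun y => ENNReal.ofReal (pdf N y) := rfl

lemma integral_eq_integral_pdf_mul (f : (Fin N → ℝ) → ℝ) :
    ∫ y, f y ∂stdGaussN N = ∫ y, pdf N y * f y := by
  have hmeas : Measurable (pdf N) := by unfold pdf; fun_prop
  rw [eq_withDensity_pdf, integral_withDensity_eq_integral_toReal_smul
    hmeas.ennreal_ofReal (Filter.Eventually.of_forall fun _ => ENNReal.ofReal_lt_top)]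
  simp only [ENNReal.toReal_ofReal (pdf_nonneg _), smul_eq_mul]

lemma pdf_mul_exp_dotProduct (c y : Fin N → ℝ) :
    pdf N y * Real.exp (c ⬝ᵥ y - c ⬝ᵥ c / 2) = pdf N (y - c) := by
  have hsq : ∑ i, (y - c) i ^ 2 = ∑ i, y i ^ 2 - 2 * c ⬝ᵥ y + c ⬝ᵥ c := by
    simp only [dotProduct, Pi.sub_apply, Finset.mul_sum, ← Finset.sum_sub_distrib,
      ← Finset.sum_add_distrib]
    exact Finset.sum_congr rfl fun i _ => by ring
  rw [pdf, pdf, hsq, mul_assoc, ← Real.exp_add]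
  ring_nf

theorem integral_exp_dotProduct_mul (c : Fin N → ℝ) (f : (Fin N → ℝ) → ℝ) :
    ∫ y, Real.exp (c ⬝ᵥ y - c ⬝ᵥ c / 2) * f y ∂stdGaussN N = ∫ y, f (y + c) ∂stdGaussN N := by
  simp only [integral_eq_integral_pdf_mul, ← mul_assoc, pdf_mul_exp_dotProduct]
  rw [← integral_add_right_eq_self _ c]
  simp only [add_sub_cancel_right]

end StdGaussN

lemma Matrix.mulVec_row_apply {n k R : Type*} [Fintype k] [CommSemiring R]
    (P : Matrix n k R) (i m : n) : Matrix.mulVec P (P m) i = (P * P.transpose) i m := by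
  simp only [Matrix.mulVec, dotProduct, Matrix.mul_apply, Matrix.transpose_apply]

theorem multidim_elimination_general
    (N : ℕ) (r T : ℝ) (hT : 0 < T)
    (σ : Fin N → ℝ) (S₀ : Fin N → ℝ)
    (m : Fin N) (P : Matrix (Fin N) (Fin N) ℝ)
    (hProw : ∑ j, (P m j) ^ 2 = 1)
    (SR : Fin N → (Fin N → ℝ) → ℝ)
    (hSR : ∀ i y, SR i y =
      S₀ i * Real.exp ((r - (σ i) ^ 2 / 2) * T + σ i * Real.sqrt T * Matrix.mulVec P y i))
    (g : (Fin N → ℝ) → ℝ) :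
    ∫ y, SR m y * g (fun i => SR i y) ∂(stdGaussN N) =
      S₀ m * Real.exp (r * T) *
        ∫ y, g (fun i =>
          Real.exp (σ i * σ m * T * (P * P.transpose) i m) * SR i y) ∂(stdGaussN N) := by
  have hsqrt : Real.sqrt T * Real.sqrt T = T := Real.mul_self_sqrt hT.le
  set c : Fin N → ℝ := (σ m * Real.sqrt T) • P m
  have hcc : c ⬝ᵥ c = σ m ^ 2 * T := by
    have hrow : P m ⬝ᵥ P m = 1 := by simpa only [dotProduct, sq] using hProw
    simp only [c, smul_dotProduct, dotProduct_smul, hrow, smul_eq_mul]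
    linear_combination σ m ^ 2 * hsqrt
  have hSRm (y : Fin N → ℝ) :
      SR m y = S₀ m * Real.exp (r * T) * Real.exp (c ⬝ᵥ y - c ⬝ᵥ c / 2) := by
    rw [hSR, Matrix.mulVec_apply, Matrix.row_apply', smul_dotProduct, hcc, smul_eq_mul, mul_assoc (S₀ m), ← Real.exp_add]
    ring_nf
  have hSR_shift (i : Fin N) (y : Fin N → ℝ) :
      SR i (y + c) = Real.exp (σ i * σ m * T * (P * P.transpose) i m) * SR i y := by
    rw [hSR, hSR, Matrix.mulVec_add, Matrix.mulVec_smul, Pi.add_apply, Pi.smul_apply,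
      Matrix.mulVec_row_apply, mul_left_comm, ← Real.exp_add, smul_eq_mul]
    congr 2
    linear_combination σ i * σ m * (P * P.transpose) i m * hsqrt
  calc ∫ y, SR m y * g (fun i => SR i y) ∂stdGaussN N
      = S₀ m * Real.exp (r * T) *
          ∫ y, Real.exp (c ⬝ᵥ y - c ⬝ᵥ c / 2) * g (fun i => SR i y) ∂stdGaussN N := by
        rw [← integral_const_mul]
        simp only [hSRm, mul_assoc]
    _ = _ := by simp only [StdGaussN.integral_exp_dotProduct_mul, hSR_shift]

theorem multidim_elimination
    (N : ℕ) (r T : ℝ) (hT : 0 < T)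
    (σ : Fin N → ℝ) (S₀ : Fin N → ℝ) (hS₀ : ∀ i, 0 < S₀ i)
    (m : Fin N) (P : Matrix (Fin N) (Fin N) ℝ)
    (hProw : ∑ j, (P m j) ^ 2 = 1)
    (SR : Fin N → (Fin N → ℝ) → ℝ)
    (hSR : ∀ i y, SR i y =
      S₀ i * Real.exp ((r - (σ i) ^ 2 / 2) * T + σ i * Real.sqrt T * Matrix.mulVec P y i))
    (g : (Fin N → ℝ) → ℝ) (hg : Measurable g)
    (hgi : (∀ s, 0 ≤ g s) ∨
      (Integrable (fun y => SR m y * g (fun i => SR i y)) (stdGaussN N) ∧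
        Integrable
          (fun y => g (fun i =>
            Real.exp (σ i * σ m * T * (P * P.transpose) i m) * SR i y))
          (stdGaussN N))) :
    ∫ y, SR m y * g (fun i => SR i y) ∂(stdGaussN N) =
      S₀ m * Real.exp (r * T) *
        ∫ y, g (fun i =>
          Real.exp (σ i * σ m * T * (P * P.transpose) i m) * SR i y) ∂(stdGaussN N) :=
  multidim_elimination_general N r T hT σ S₀ m P hProw SR hSR g
end
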